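/- arXiv:2510.06883 — 7 statements merged into one kernel-verified Lean document; each statement's English description precedes it below -/
import Mathlib

section
/- If S is 2-C-normal, then the antilinear operator SC satisfies that (SC)² (a bounded linear operator) is normal, i.e., ((SC)²)* (SC)² = (SC)² ((SC)²)*. -/
open ContinuousLinearMap

variable {H : Type*} [NormedAddCommGroup H] [InnerProductSpace ℂ H] [CompleteSpace H]

/-- A conjugation on `H`: antilinear, involutive, and `⟪Cx, Cy⟫ = ⟪y, x⟫`. -/
def Conjugation (C : H → H) : Prop :=
  (∀ (a : ℂ) (x y : H), C (a • x + y) = (starRingEnd ℂ) a • C x + C y) ∧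
  (∀ x : H, C (C x) = x) ∧
  (∀ x y : H, (inner ℂ (C x) (C y) : ℂ) = inner ℂ y x)

/-- `S` is `C`-normal: `C S* S C = S S*`. -/
def CNormal (C : H → H) (S : H →L[ℂ] H) : Prop :=
  ∀ x : H, C (adjoint S (S (C x))) = S (adjoint S x)

/-- `S` is 2-`C`-normal: `C S S* C S* = S* C S* S C`. -/
def TwoCNormal (C : H → H) (S : H →L[ℂ] H) : Prop :=
  ∀ x : H, C (S (adjoint S (C (adjoint S x)))) =
    adjoint S (C (adjoint S (S (C x))))

theorem TwoCNormal.conj_apply {C : H → H} {S : H →L[ℂ] H} (h : TwoCNormal C S)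
    (hC : Function.Involutive C) (y : H) :
    C (adjoint S (C (adjoint S (S (C y))))) = S (adjoint S (C (adjoint S y))) := by
  rw [← h y, hC]

theorem stmt3 (C : H → H) (hC : Conjugation C) (S : H →L[ℂ] H)
    (h : TwoCNormal C S) :
    ∀ x : H, C (adjoint S (C (adjoint S (S (C (S (C x))))))) =
      S (C (S (C (C (adjoint S (C (adjoint S x))))))) := by
  have hCC : Function.Involutive C := hC.2.1
  intro x
  -- both sides reduce to `S S* C S* S C x`
  rw [h.conj_apply hCC (S (C x)), hCC, h x]
end

section
/- If S is invertible and 2-C-normal, then S⁻¹ is 2-C-normal. -/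
open ContinuousLinearMap

variable {H : Type*} [NormedAddCommGroup H] [InnerProductSpace ℂ H] [CompleteSpace H]

open Function

theorem ContinuousLinearMap.leftInverse_of_comp_eq_one {R M : Type*} [Semiring R]
    [TopologicalSpace M] [AddCommMonoid M] [Module R M] {A B : M →L[R] M}
    (h : A ∘L B = 1) : LeftInverse A B :=
  fun x => by simpa using congr($h x)

theorem ContinuousLinearMap.adjoint_comp_adjoint_eq_one {𝕜 E : Type*} [RCLike 𝕜]
    [NormedAddCommGroup E] [InnerProductSpace 𝕜 E] [CompleteSpace E] {A B : E →L[𝕜] E}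
    (h : A ∘L B = 1) : adjoint B ∘L adjoint A = 1 := by
  rw [← adjoint_comp, h]
  exact adjoint_id

/-- Invert both sides: the inverses of the two words in `h` are the two words in the conclusion. -/
theorem Function.Involutive.comp_eq_comp_of_inverses {α : Type*} {c s a t b : α → α}
    (hc : Involutive c) (hts : LeftInverse t s) (hst : LeftInverse s t)
    (hba : LeftInverse b a) (hab : LeftInverse a b)
    (h : c ∘ s ∘ a ∘ c ∘ a = a ∘ c ∘ a ∘ s ∘ c) :
    c ∘ t ∘ b ∘ c ∘ b = b ∘ c ∘ b ∘ t ∘ c := by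
  have hleft : LeftInverse (b ∘ c ∘ b ∘ t ∘ c) (c ∘ s ∘ a ∘ c ∘ a) := fun x => by
    simp only [comp_apply, hc _, hts _, hba _]
  have hright : RightInverse (c ∘ t ∘ b ∘ c ∘ b) (a ∘ c ∘ a ∘ s ∘ c) := fun x => by
    simp only [comp_apply, hc _, hst _, hab _]
  exact (hleft.eq_rightInverse (h ▸ hright)).symm

theorem twoCNormal_iff_comp (C : H → H) (S : H →L[ℂ] H) :
    TwoCNormal C S ↔ C ∘ S ∘ adjoint S ∘ C ∘ adjoint S = adjoint S ∘ C ∘ adjoint S ∘ S ∘ C :=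
  funext_iff.symm

theorem stmt6 (C : H → H) (hC : Conjugation C) (S Sinv : H →L[ℂ] H)
    (h1 : S ∘L Sinv = 1) (h2 : Sinv ∘L S = 1)
    (h : TwoCNormal C S) : TwoCNormal C Sinv := by
  rw [twoCNormal_iff_comp] at h ⊢
  exact Involutive.comp_eq_comp_of_inverses hC.2.1 (leftInverse_of_comp_eq_one h2)
    (leftInverse_of_comp_eq_one h1)
    (leftInverse_of_comp_eq_one (adjoint_comp_adjoint_eq_one h1))
    (leftInverse_of_comp_eq_one (adjoint_comp_adjoint_eq_one h2)) h
end

section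
/- For every unitary U and every n ∈ ℕ, the operator Uⁿ is 2-C-normal. -/
open ContinuousLinearMap

variable {H : Type*} [NormedAddCommGroup H] [InnerProductSpace ℂ H] [CompleteSpace H]

theorem twoCNormal_of_mem_unitary {C : H → H} (hC : Function.Involutive C) {S : H →L[ℂ] H}
    (hS : S ∈ unitary (H →L[ℂ] H)) : TwoCNormal C S := by
  have apply_adjoint_apply (y : H) : S (adjoint S y) = y := by
    simpa [star_eq_adjoint] using congr($(Unitary.mul_star_self_of_mem hS) y)
  have adjoint_apply_apply (y : H) : adjoint S (S y) = y := by
    simpa [star_eq_adjoint] using congr($(Unitary.star_mul_self_of_mem hS) y)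
  intro x
  rw [apply_adjoint_apply, adjoint_apply_apply, hC, hC]

theorem stmt8 (C : H → H) (hC : Conjugation C) (U : H →L[ℂ] H)
    (hU1 : adjoint U ∘L U = 1) (hU2 : U ∘L adjoint U = 1) (n : ℕ) :
    TwoCNormal C (U ^ n) := by
  have hU : U ∈ unitary (H →L[ℂ] H) := Unitary.mem_iff.2 ⟨hU1, hU2⟩
  exact twoCNormal_of_mem_unitary hC.2.1 (pow_mem hU n)
end

section
/- If S is invertible with S* = λ S⁻¹ for some λ ∈ ℂ, then S is 2-C-normal. -/
open ContinuousLinearMap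

variable {H : Type*} [NormedAddCommGroup H] [InnerProductSpace ℂ H] [CompleteSpace H]

/-!
Since `S* = λ S⁻¹`, both `S S*` and `S* S` equal the scalar `λ`. An antilinear involution `C`
turns `C λ C` into `conj λ`, so both sides of the 2-`C`-normality identity reduce to
`conj λ • S*`.
-/

namespace Conjugation

variable {E : Type*} [NormedAddCommGroup E] [InnerProductSpace ℂ E] {C : E → E}

theorem map_zero (hC : Conjugation C) : C 0 = 0 := by
  simpa using hC.1 1 0 0

theorem map_smul (hC : Conjugation C) (a : ℂ) (x : E) :
    C (a • x) = (starRingEnd ℂ) a • C x := by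
  simpa [hC.map_zero] using hC.1 a x 0

theorem apply_apply (hC : Conjugation C) (x : E) : C (C x) = x :=
  hC.2.1 x

theorem apply_smul_apply (hC : Conjugation C) (a : ℂ) (x : E) :
    C (a • C x) = (starRingEnd ℂ) a • x := by
  rw [hC.map_smul, hC.apply_apply]

end Conjugation

theorem twoCNormal_of_mul_adjoint_eq_smul_one {C : H → H} (hC : Conjugation C)
    {S : H →L[ℂ] H} {μ : ℂ} (hSSa : S ∘L adjoint S = μ • 1) (hSaS : adjoint S ∘L S = μ • 1) :
    TwoCNormal C S := by
  intro x
  have hSSa_apply (y : H) : S (adjoint S y) = μ • y := by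
    simpa using DFunLike.congr_fun hSSa y
  have hSaS_apply (y : H) : adjoint S (S y) = μ • y := by
    simpa using DFunLike.congr_fun hSaS y
  rw [hSSa_apply, hC.apply_smul_apply, hSaS_apply, hC.apply_smul_apply, map_smul]

theorem stmt13 (C : H → H) (hC : Conjugation C) (S Sinv : H →L[ℂ] H)
    (h1 : S ∘L Sinv = 1) (h2 : Sinv ∘L S = 1)
    (lam : ℂ) (hSa : adjoint S = lam • Sinv) :
    TwoCNormal C S := by
  refine twoCNormal_of_mul_adjoint_eq_smul_one hC (μ := lam) ?_ ?_
  · rw [hSa, comp_smul, h1]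
  · rw [hSa, smul_comp, h2]
end

section
/- Let S = U|S| be the polar decomposition with U unitary, and suppose U = CJ where C and J are conjugations. Then S is C-normal if and only if J|S|²J = |S|². -/
open ContinuousLinearMap

variable {H : Type*} [NormedAddCommGroup H] [InnerProductSpace ℂ H] [CompleteSpace H]

/-
If `S = CJP` with `P` self-adjoint, then `S* = PJC`, hence `S*S = P²` and `SS* = CJP²JC`.
Conjugating `S*S` by `C` gives `CP²C`, so `C`-normality says `CP²C = CJP²JC`, which, since `C`
is a bijection, is `P² = JP²J`.
-/

namespace Conjugation

variable {E : Type*} [NormedAddCommGroup E] [InnerProductSpace ℂ E] {C : E → E}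

theorem involutive (hC : Conjugation C) : Function.Involutive C := hC.2.1

theorem inner_map_left (hC : Conjugation C) (x y : E) :
    (inner ℂ (C x) y : ℂ) = inner ℂ (C y) x := by
  conv_lhs => rw [← hC.involutive y]
  exact hC.2.2 x (C y)

theorem inner_map_right (hC : Conjugation C) (x y : E) :
    (inner ℂ x (C y) : ℂ) = inner ℂ y (C x) := by
  conv_lhs => rw [← hC.involutive x]
  exact hC.2.2 (C x) y

theorem forall_conj_apply_conj_eq_iff (hC : Conjugation C) {f g : E → E} :
    (∀ x, C (f (C x)) = C (g (C x))) ↔ ∀ x, f x = g x :=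
  ⟨fun h x => by simpa only [hC.involutive x] using hC.involutive.injective (h (C x)),
    fun h x => by rw [h]⟩

end Conjugation

section Polar

variable {C J : H → H} {S P : H →L[ℂ] H}

theorem adjoint_apply_of_eq_conj_conj (hC : Conjugation C) (hJ : Conjugation J)
    (hP : IsSelfAdjoint P) (hpolar : ∀ x, S x = C (J (P x))) (y : H) :
    adjoint S y = P (J (C y)) := by
  refine ext_inner_right ℂ fun x => ?_
  have hPx : inner ℂ (P (J (C y))) x = inner ℂ (J (C y)) (P x) := by
    rw [← adjoint_inner_left, hP.adjoint_eq]
  rw [adjoint_inner_left, hpolar, hPx, hJ.inner_map_left, hC.inner_map_right]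

theorem adjoint_self_apply_of_eq_conj_conj (hC : Conjugation C) (hJ : Conjugation J)
    (hP : IsSelfAdjoint P) (hpolar : ∀ x, S x = C (J (P x))) (x : H) :
    adjoint S (S x) = P (P x) := by
  rw [adjoint_apply_of_eq_conj_conj hC hJ hP hpolar, hpolar, hC.involutive, hJ.involutive]

theorem self_adjoint_apply_of_eq_conj_conj (hC : Conjugation C) (hJ : Conjugation J)
    (hP : IsSelfAdjoint P) (hpolar : ∀ x, S x = C (J (P x))) (x : H) :
    S (adjoint S x) = C (J (P (P (J (C x))))) := by
  rw [adjoint_apply_of_eq_conj_conj hC hJ hP hpolar, hpolar]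

end Polar

theorem stmt15_general (C J : H → H) (hC : Conjugation C) (hJ : Conjugation J)
    (S P : H →L[ℂ] H) (hP : P.IsPositive)
    (hpolar : ∀ x : H, S x = C (J (P x))) :
    CNormal C S ↔ ∀ x : H, J (P (P (J x))) = P (P x) := by
  simp only [CNormal, adjoint_self_apply_of_eq_conj_conj hC hJ hP.isSelfAdjoint hpolar,
    self_adjoint_apply_of_eq_conj_conj hC hJ hP.isSelfAdjoint hpolar,
    hC.forall_conj_apply_conj_eq_iff (f := fun x => P (P x)) (g := fun x => J (P (P (J x))))]
  exact forall_congr' fun x => eq_comm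

theorem stmt15 (C J : H → H) (hC : Conjugation C) (hJ : Conjugation J)
    (S P : H →L[ℂ] H) (hP : P.IsPositive) (hPsq : P ∘L P = adjoint S ∘L S)
    (hpolar : ∀ x : H, S x = C (J (P x))) :
    CNormal C S ↔ ∀ x : H, J (P (P (J x))) = P (P x) :=
  stmt15_general C J hC hJ S P hP hpolar
end

section
/- Let S = U|S| be the polar decomposition with U unitary, and suppose U = CJ where C and J are conjugations. Then S is 2-C-normal if and only if (J|S|J)² |S| = |S| (J|S|J)². -/
/-! Since `S = C J P` with `P` self-adjoint, `S* = P J C`. Substituting these into both sides of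
`C S S* C S* = S* C S* S C`, the conjugations cancel in pairs and, after the change of variable
`x ↦ C J x`, the identity becomes `J P P J P = P J P P J`, i.e. `(J P J)² P = P (J P J)²`. -/

open ContinuousLinearMap

variable {H : Type*} [NormedAddCommGroup H] [InnerProductSpace ℂ H] [CompleteSpace H]

namespace Conjugation

variable {E : Type*} [NormedAddCommGroup E] [InnerProductSpace ℂ E] {C : E → E}

theorem adjoint_apply_of_apply_eq {C J : H → H} (hC : Conjugation C) (hJ : Conjugation J)
    {S P : H →L[ℂ] H} (hS : ∀ x, S x = C (J (P x))) (y : H) :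
    adjoint S y = adjoint P (J (C y)) := by
  refine ext_inner_left ℂ fun v => ?_
  rw [adjoint_inner_right, adjoint_inner_right, hS, hC.inner_map_left, hJ.inner_map_right]

end Conjugation

theorem stmt16_general (C J : H → H) (hC : Conjugation C) (hJ : Conjugation J)
    (S P : H →L[ℂ] H) (hP : P.IsPositive)
    (hpolar : ∀ x : H, S x = C (J (P x))) :
    TwoCNormal C S ↔
      ∀ x : H, J (P (J (J (P (J (P x)))))) = P (J (P (J (J (P (J x)))))) := by
  have hadj : ∀ y, adjoint S y = P (J (C y)) := fun y => by
    rw [hC.adjoint_apply_of_apply_eq hJ hpolar, hP.isSelfAdjoint.adjoint_eq]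
  rw [TwoCNormal, (hC.involutive.surjective.comp hJ.involutive.surjective).forall]
  simp only [Function.comp_apply, hadj, hpolar, hC.involutive _, hJ.involutive _]

theorem stmt16 (C J : H → H) (hC : Conjugation C) (hJ : Conjugation J)
    (S P : H →L[ℂ] H) (hP : P.IsPositive) (hPsq : P ∘L P = adjoint S ∘L S)
    (hpolar : ∀ x : H, S x = C (J (P x))) :
    TwoCNormal C S ↔
      ∀ x : H, J (P (J (J (P (J (P x)))))) = P (J (P (J (J (P (J x)))))) :=
  stmt16_general C J hC hJ S P hP hpolar
end

section
/- Let S be invertible and suppose S* commutes with C|S*|C, where |S*| = (S S*)^{1/2}. Then S is normal if and only if S is 2-C-normal. -/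
/-!
Squaring the commutation relation `S* (C P C) = (C P C) S*` and using `C² = 1`, `P² = S S*`
shows that `S*` commutes with `C S S* C`. Then `C S S* C S* = S* C S S* C`, so 2-`C`-normality
reads `S* C (S S*) C = S* C (S* S) C`, and cancelling the injective maps `S*` and `C` leaves
`S S* = S* S`.
-/

open ContinuousLinearMap

variable {H : Type*} [NormedAddCommGroup H] [InnerProductSpace ℂ H] [CompleteSpace H]

theorem Function.Commute.conj_comp_self {α : Type*} {A C P : α → α} (hC : Function.Involutive C)
    (h : Function.Commute A (C ∘ P ∘ C)) : Function.Commute A (C ∘ P ∘ P ∘ C) := by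
  have hsq : C ∘ P ∘ P ∘ C = (C ∘ P ∘ C) ∘ (C ∘ P ∘ C) := by
    funext x
    simp only [Function.comp_apply, hC (P (C x))]
  rw [hsq]
  exact h.comp_right h

theorem ContinuousLinearMap.injective_adjoint_of_comp_eq_one {𝕜 E F : Type*} [RCLike 𝕜]
    [NormedAddCommGroup E] [InnerProductSpace 𝕜 E] [CompleteSpace E]
    [NormedAddCommGroup F] [InnerProductSpace 𝕜 F] [CompleteSpace F]
    {S : E →L[𝕜] F} {T : F →L[𝕜] E} (h : S ∘L T = 1) : Function.Injective (adjoint S) := by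
  have hleft : adjoint T ∘L adjoint S = 1 := by rw [← adjoint_comp, h, adjoint_one]
  exact Function.LeftInverse.injective (g := adjoint T) fun x => by
    simpa using congr($hleft x)

theorem twoCNormal_iff_of_commute {C : H → H} (hC : Function.Involutive C) {S : H →L[ℂ] H}
    (hS : Function.Injective (adjoint S))
    (h : Function.Commute (adjoint S) (C ∘ (S ∘L adjoint S) ∘ C)) :
    TwoCNormal C S ↔ adjoint S ∘L S = S ∘L adjoint S := by
  constructor
  · intro h2
    ext x
    have hx := (h (C x)).trans (h2 (C x))
    simp only [Function.comp_apply, hC x] at hx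
    exact (hC.injective (hS hx)).symm
  · intro hn x
    refine (h x).symm.trans ?_
    simp only [Function.comp_apply, ← hn, comp_apply]

theorem stmt17_general (C : H → H) (hC : Conjugation C) (S Sinv P : H →L[ℂ] H)
    (h1 : S ∘L Sinv = 1)
    (hPsq : P ∘L P = S ∘L adjoint S)
    (hcomm : ∀ x : H, adjoint S (C (P (C x))) = C (P (C (adjoint S x)))) :
    adjoint S ∘L S = S ∘L adjoint S ↔ TwoCNormal C S := by
  have hCC : Function.Involutive C := hC.2.1
  have hcommSq : Function.Commute (adjoint S) (C ∘ (S ∘L adjoint S) ∘ C) := by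
    rw [← hPsq]
    exact Function.Commute.conj_comp_self hCC hcomm
  exact (twoCNormal_iff_of_commute hCC (injective_adjoint_of_comp_eq_one h1) hcommSq).symm

theorem stmt17 (C : H → H) (hC : Conjugation C) (S Sinv P : H →L[ℂ] H)
    (h1 : S ∘L Sinv = 1) (h2 : Sinv ∘L S = 1)
    (hP : P.IsPositive) (hPsq : P ∘L P = S ∘L adjoint S)
    (hcomm : ∀ x : H, adjoint S (C (P (C x))) = C (P (C (adjoint S x)))) :
    adjoint S ∘L S = S ∘L adjoint S ↔ TwoCNormal C S :=
  stmt17_general C hC S Sinv P h1 hPsq hcomm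
end
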